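/- Let x̂ = (t, x(t)) be a smooth 2-dimensional path on [a,b] with x(a) = 0. Then for all nonnegative integers n and m, the integral ∫_a^b (t−a)^n x(t)^m dt equals the signature coefficient ⟨(e_1^{⧢n} ⧢ e_2^{⧢m}) ≻ e_1, S(x̂)_{a,b}⟩. -/

import Mathlib

open MeasureTheory intervalIntegral Real Finset

/-- Shuffle product of two words, as the list of all interleavings (with multiplicity). -/
def shuffle {α : Type*} : List α → List α → List (List α)
  | [], ys => [ys]
  | x :: xs, [] => [x :: xs]
  | x :: xs, y :: ys =>
      (shuffle xs (y :: ys)).map (x :: ·) ++ (shuffle (x :: xs) ys).map (y :: ·)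
termination_by u v => u.length + v.length

/-- Iterated integral where the word is given in reverse order (last letter first). -/
noncomputable def sigRev {d : ℕ} (x : ℝ → Fin d → ℝ) (a : ℝ) : List (Fin d) → ℝ → ℝ
  | [] => fun _ => 1
  | i :: w => fun t => ∫ s in a..t, sigRev x a w s * deriv (fun u => x u i) s

/-- Signature coefficient `⟨e_w, S(x)_{a,b}⟩` of the path `x` over `[a,b]`. -/
noncomputable def sigCoeff {d : ℕ} (x : ℝ → Fin d → ℝ) (a b : ℝ) (w : List (Fin d)) : ℝ :=
  sigRev x a w.reverse b

theorem test {d : ℕ} (x : ℝ → Fin d → ℝ) : sigCoeff x 0 1 [] = 1 := rfl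

/-- Shuffle product of two formal sums of words (given as lists with multiplicity). -/
def shuffleList {α : Type*} (us vs : List (List α)) : List (List α) :=
  us.flatMap fun u => vs.flatMap fun v => shuffle u v

/-- `n`-fold shuffle power `w^{⧢ n}` of a word `w`. -/
def shufflePow {α : Type*} (w : List α) : ℕ → List (List α)
  | 0 => [[]]
  | n + 1 => shuffleList [w] (shufflePow w n)

/-! ### Auxiliary combinatorial lemmas about `shuffle` -/

lemma shuffle_nil_left {α : Type*} (v : List α) : shuffle [] v = [v] := by simp [shuffle]

lemma shuffle_nil_right {α : Type*} (u : List α) : shuffle u [] = [u] := by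
  cases u <;> simp [shuffle]

lemma shuffle_cons_cons {α : Type*} (x y : α) (xs ys : List α) :
    shuffle (x :: xs) (y :: ys) =
      (shuffle xs (y :: ys)).map (x :: ·) ++ (shuffle (x :: xs) ys).map (y :: ·) := by
  simp [shuffle]

/-- End-append recursion for sums over shuffles. -/
lemma sum_shuffle_append {α : Type*} :
    ∀ (k : ℕ) (U V : List α) (a b : α) (f : List α → ℝ), U.length + V.length ≤ k →
    ((shuffle (U ++ [a]) (V ++ [b])).map f).sum =
      ((shuffle U (V ++ [b])).map (fun w => f (w ++ [a]))).sum +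
      ((shuffle (U ++ [a]) V).map (fun w => f (w ++ [b]))).sum := by
  intro k
  induction k with
  | zero =>
    intro U V a b f h
    have hU : U = [] := by cases U <;> simp_all
    have hV : V = [] := by cases V <;> simp_all
    subst hU; subst hV
    simp [shuffle_cons_cons, shuffle_nil_left, shuffle_nil_right]
    ring
  | succ k ih =>
    intro U V a b f h
    match U, V with
    | [], [] =>
      simp [shuffle_cons_cons, shuffle_nil_left, shuffle_nil_right]
      ring
    | [], c :: V' =>
      have h1 := ih [] V' a b (fun w => f (c :: w)) (by simp at h ⊢; omega)
      simp only [List.nil_append, List.cons_append, shuffle_cons_cons, shuffle_nil_left,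
        shuffle_nil_right, List.map_append, List.sum_append, List.map_map, List.map_cons,
        List.map_nil, List.sum_cons, List.sum_nil, Function.comp_def] at h1 ⊢
      rw [h1]; ring
    | c :: U', [] =>
      have h1 := ih U' [] a b (fun w => f (c :: w)) (by simp at h ⊢; omega)
      simp only [List.nil_append, List.cons_append, shuffle_cons_cons, shuffle_nil_left,
        shuffle_nil_right, List.map_append, List.sum_append, List.map_map, List.map_cons,
        List.map_nil, List.sum_cons, List.sum_nil, Function.comp_def] at h1 ⊢
      rw [h1]; ring
    | c :: U', d :: V' =>
      have h1 := ih U' (d :: V') a b (fun w => f (c :: w)) (by simp at h ⊢; omega)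
      have h2 := ih (c :: U') V' a b (fun w => f (d :: w)) (by simp at h ⊢; omega)
      simp only [List.nil_append, List.cons_append, shuffle_cons_cons, shuffle_nil_left,
        shuffle_nil_right, List.map_append, List.sum_append, List.map_map, List.map_cons,
        List.map_nil, List.sum_cons, List.sum_nil, Function.comp_def] at h1 h2 ⊢
      rw [h1, h2]; ring

/-- Reversal identity for sums over shuffles. -/
lemma sum_shuffle_reverse {α : Type*} :
    ∀ (k : ℕ) (u v : List α) (f : List α → ℝ), u.length + v.length ≤ k →
    ((shuffle u v).map (fun w => f w.reverse)).sum =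
      ((shuffle u.reverse v.reverse).map f).sum := by
  intro k
  induction k with
  | zero =>
    intro u v f h
    have hU : u = [] := by cases u <;> simp_all
    have hV : v = [] := by cases v <;> simp_all
    subst hU; subst hV
    simp [shuffle_nil_left]
  | succ k ih =>
    intro u v f h
    match u, v with
    | [], v => simp [shuffle_nil_left]
    | c :: u', [] => simp [shuffle_nil_right]
    | c :: u', d :: v' =>
      have h1 := ih u' (d :: v') (fun w => f (w ++ [c])) (by simp at h ⊢; omega)
      have h2 := ih (c :: u') v' (fun w => f (w ++ [d])) (by simp at h ⊢; omega)
      have h3 := sum_shuffle_append (u'.reverse.length + v'.reverse.length + 1)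
        u'.reverse v'.reverse c d f (by simp)
      simp only [shuffle_cons_cons, List.map_append, List.sum_append, List.map_map,
        Function.comp_def, List.reverse_cons] at h1 h2 h3 ⊢
      rw [h1, h2]
      rw [h3]

/-! ### Analytic lemmas about `sigRev` -/

section Analytic

variable {d : ℕ} (X : ℝ → Fin d → ℝ) (a : ℝ)

lemma sigRev_nil : sigRev X a [] = fun _ => (1 : ℝ) := rfl

lemma sigRev_cons (i : Fin d) (w : List (Fin d)) :
    sigRev X a (i :: w) = fun t => ∫ s in a..t, sigRev X a w s * deriv (fun u => X u i) s := rfl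

lemma sigRev_at_a (i : Fin d) (w : List (Fin d)) : sigRev X a (i :: w) a = 0 := by
  rw [sigRev_cons]; exact integral_same

lemma sigRev_continuous (hD : ∀ i, Continuous (deriv fun u => X u i)) :
    ∀ w : List (Fin d), Continuous (sigRev X a w) := by
  intro w
  induction w with
  | nil => exact continuous_const
  | cons i w ih =>
    rw [sigRev_cons]
    exact intervalIntegral.continuous_primitive
      (fun c d => ((ih.mul (hD i))).intervalIntegrable c d) a

/-- Formal derivative of `sigRev`. -/
noncomputable def sigDer {d : ℕ} (X : ℝ → Fin d → ℝ) (a : ℝ) : List (Fin d) → ℝ → ℝ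
  | [] => fun _ => 0
  | i :: w => fun t => sigRev X a w t * deriv (fun u => X u i) t

lemma sigRev_hasDerivAt (hD : ∀ i, Continuous (deriv fun u => X u i))
    (w : List (Fin d)) (t : ℝ) : HasDerivAt (sigRev X a w) (sigDer X a w t) t := by
  cases w with
  | nil => simpa [sigRev_nil, sigDer] using hasDerivAt_const t (1 : ℝ)
  | cons i w =>
    rw [sigRev_cons]
    exact (((sigRev_continuous X a hD w).mul (hD i)).integral_hasStrictDerivAt a t).hasDerivAt

lemma hasDerivAt_list_sum {β : Type*} (l : List β) (F : β → ℝ → ℝ) (F' : β → ℝ) (t : ℝ)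
    (h : ∀ b ∈ l, HasDerivAt (F b) (F' b) t) :
    HasDerivAt (fun s => (l.map (fun b => F b s)).sum) ((l.map F').sum) t := by
  induction l with
  | nil => simpa using hasDerivAt_const t (0 : ℝ)
  | cons b l ih =>
    simp only [List.map_cons, List.sum_cons]
    exact (h b (List.mem_cons_self)).add (ih fun c hc => h c (List.mem_cons_of_mem _ hc))

/-- The shuffle identity for iterated integrals. -/
lemma shuffle_identity (hD : ∀ i, Continuous (deriv fun u => X u i)) :
    ∀ (k : ℕ) (u v : List (Fin d)), u.length + v.length ≤ k → ∀ t : ℝ,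
    ((shuffle u v).map (fun w => sigRev X a w t)).sum = sigRev X a u t * sigRev X a v t := by
  intro k
  induction k with
  | zero =>
    intro u v h t
    have hU : u = [] := by cases u <;> simp_all
    have hV : v = [] := by cases v <;> simp_all
    subst hU; subst hV
    simp [shuffle_nil_left, sigRev_nil]
  | succ k ih =>
    intro u v h t
    match u, v with
    | [], v => simp [shuffle_nil_left, sigRev_nil]
    | c :: u', [] => simp [shuffle_nil_right, sigRev_nil]
    | i :: u', j :: v' =>
      set P : ℝ → ℝ := fun s => ((shuffle (i :: u') (j :: v')).map (fun w => sigRev X a w s)).sum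
        - sigRev X a (i :: u') s * sigRev X a (j :: v') s with hPdef
      have hP : ∀ s, HasDerivAt P 0 s := by
        intro s
        have hsum := hasDerivAt_list_sum (shuffle (i :: u') (j :: v')) (fun w => sigRev X a w)
          (fun w => sigDer X a w s) s (fun w _ => sigRev_hasDerivAt X a hD w s)
        have hprod := (sigRev_hasDerivAt X a hD (i :: u') s).mul
          (sigRev_hasDerivAt X a hD (j :: v') s)
        have key := hsum.sub hprod
        have e1 := ih u' (j :: v') (by simp at h ⊢; omega) s
        have e2 := ih (i :: u') v' (by simp at h ⊢; omega) s
        convert key using 1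
        · rfl
        · rfl
        · rfl
        simp only [shuffle_cons_cons, List.map_append, List.sum_append, List.map_map,
          Function.comp_def, sigDer]
        rw [List.sum_map_mul_right, List.sum_map_mul_right, e1, e2]
        ring
      have hconst := is_const_of_deriv_eq_zero (fun s => (hP s).differentiableAt)
        (fun s => (hP s).deriv)
      have hPa : P a = 0 := by
        have hz : ∀ y ∈ (shuffle (i :: u') (j :: v')).map (fun w => sigRev X a w a), y = 0 := by
          intro y hy
          obtain ⟨w, hw, rfl⟩ := List.mem_map.mp hy
          rw [shuffle_cons_cons] at hw
          rcases List.mem_append.mp hw with hw | hw <;>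
            · obtain ⟨w', -, rfl⟩ := List.mem_map.mp hw
              exact sigRev_at_a X a _ _
        simp only [hPdef, List.sum_eq_zero hz, sigRev_at_a, zero_mul, sub_zero]
      have hPt : P t = 0 := (hconst t a).trans hPa
      have h0 : P t = ((shuffle (i :: u') (j :: v')).map (fun w => sigRev X a w t)).sum
        - sigRev X a (i :: u') t * sigRev X a (j :: v') t := rfl
      rw [h0] at hPt
      linarith

end Analytic

/-! ### Sums over `shuffleList` and `shufflePow` -/

lemma continuous_list_sum' {β : Type*} (l : List β) (g : β → ℝ → ℝ)
    (h : ∀ b ∈ l, Continuous (g b)) :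
    Continuous fun s => (l.map (fun b => g b s)).sum := by
  induction l with
  | nil => simpa using continuous_const
  | cons b l ih =>
    simp only [List.map_cons, List.sum_cons]
    exact (h b (List.mem_cons_self)).add (ih fun c hc => h c (List.mem_cons_of_mem _ hc))

lemma integral_list_sum {β : Type*} (l : List β) (g : β → ℝ → ℝ)
    (h : ∀ b ∈ l, Continuous (g b)) (a c : ℝ) :
    (∫ s in a..c, (l.map (fun b => g b s)).sum) = (l.map (fun b => ∫ s in a..c, g b s)).sum := by
  induction l with
  | nil => simp
  | cons b l ih =>
    simp only [List.map_cons, List.sum_cons]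
    rw [intervalIntegral.integral_add ((h b (List.mem_cons_self)).intervalIntegrable a c)
      ((continuous_list_sum' l g (fun e he => h e (List.mem_cons_of_mem _ he))).intervalIntegrable
        a c), ih (fun e he => h e (List.mem_cons_of_mem _ he))]

lemma sum_shuffleList {α : Type*} (us vs : List (List α)) (f : List α → ℝ) :
    ((shuffleList us vs).map f).sum =
      (us.map fun u => (vs.map fun v => ((shuffle u v).map f).sum).sum).sum := by
  simp [shuffleList, List.map_flatMap, List.flatMap_def, List.sum_flatten, Function.comp_def]

section Pow

variable {d : ℕ} (X : ℝ → Fin d → ℝ) (a : ℝ)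

lemma sum_shufflePow (hD : ∀ i, Continuous (deriv fun u => X u i)) (c : Fin d) :
    ∀ (n : ℕ) (t : ℝ), ((shufflePow [c] n).map (fun u => sigRev X a u.reverse t)).sum
      = (sigRev X a [c] t) ^ n := by
  intro n
  induction n with
  | zero => intro t; simp [shufflePow, sigRev_nil]
  | succ n ih =>
    intro t
    rw [shufflePow, sum_shuffleList]
    simp only [List.map_cons, List.map_nil, List.sum_cons, List.sum_nil, add_zero]
    have he : ∀ v ∈ shufflePow [c] n,
        ((shuffle [c] v).map (fun w => sigRev X a w.reverse t)).sum
          = sigRev X a [c] t * sigRev X a v.reverse t := by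
      intro v _
      have hrev := sum_shuffle_reverse ([c].length + v.length) [c] v
        (fun w => sigRev X a w t) le_rfl
      have hid := shuffle_identity X a hD ([c].reverse.length + v.reverse.length)
        [c].reverse v.reverse le_rfl t
      simp only [List.reverse_cons, List.reverse_nil, List.nil_append] at hrev hid
      rw [hrev, hid]
    rw [List.map_congr_left he, List.sum_map_mul_left, ih]
    ring

lemma main_pointwise (hD : ∀ i, Continuous (deriv fun u => X u i)) (c0 c1 : Fin d) (n m : ℕ) (t : ℝ) :
    ((shuffleList (shufflePow [c0] n) (shufflePow [c1] m)).map
        (fun w => sigRev X a w.reverse t)).sum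
      = (sigRev X a [c0] t) ^ n * (sigRev X a [c1] t) ^ m := by
  rw [sum_shuffleList]
  have inner : ∀ u ∈ shufflePow [c0] n,
      ((shufflePow [c1] m).map
        (fun v => ((shuffle u v).map (fun w => sigRev X a w.reverse t)).sum)).sum
      = sigRev X a u.reverse t
          * ((shufflePow [c1] m).map (fun v => sigRev X a v.reverse t)).sum := by
    intro u _
    have he : ∀ v ∈ shufflePow [c1] m,
        ((shuffle u v).map (fun w => sigRev X a w.reverse t)).sum
          = sigRev X a u.reverse t * sigRev X a v.reverse t := by
      intro v _
      have hrev := sum_shuffle_reverse (u.length + v.length) u v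
        (fun w => sigRev X a w t) le_rfl
      rw [hrev]
      exact shuffle_identity X a hD (u.reverse.length + v.reverse.length)
        u.reverse v.reverse le_rfl t
    rw [List.map_congr_left he, List.sum_map_mul_left]
  rw [List.map_congr_left inner, List.sum_map_mul_right,
    sum_shufflePow X a hD c0 n t, sum_shufflePow X a hD c1 m t]

end Pow

/-- For the augmented path `x̂(t) = (t, x(t))` on `[a,b]` with `x(a) = 0`,
`∫_a^b (t−a)^n x(t)^m dt = ⟨(e₁^{⧢n} ⧢ e₂^{⧢m}) ≻ e₁, S(x̂)_{a,b}⟩`, where `≻` is the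
right half-shuffle product (appending the letter `e₁`). -/
theorem integral_eq_halfShuffle_sig (a b : ℝ) (x : ℝ → ℝ) (hx : ContDiff ℝ (⊤ : ℕ∞) x)
    (hxa : x a = 0) (n m : ℕ) :
    (∫ t in a..b, (t - a) ^ n * x t ^ m) =
      (((shuffleList (shufflePow [(0 : Fin 2)] n) (shufflePow [(1 : Fin 2)] m)).map
          fun w => sigCoeff (fun t i => if i = 0 then t else x t) a b (w ++ [(0 : Fin 2)])).sum) := by
  set X : ℝ → Fin 2 → ℝ := fun t i => if i = 0 then t else x t with hXdef
  have hX0 : (fun u => X u 0) = fun u => u := by funext u; simp [hXdef]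
  have hX1 : (fun u => X u 1) = x := by funext u; simp [hXdef]
  have hD : ∀ i : Fin 2, Continuous (deriv fun u => X u i) := by
    intro i
    fin_cases i
    · show Continuous (deriv fun u => X u 0)
      rw [hX0, deriv_id'']; exact continuous_const
    · show Continuous (deriv fun u => X u 1)
      rw [hX1]; exact hx.continuous_deriv (by simp)
  have sig0 : ∀ t : ℝ, sigRev X a [(0 : Fin 2)] t = t - a := by
    intro t
    rw [sigRev_cons]
    simp [sigRev_nil, hX0, deriv_id'']
  have sig1 : ∀ t : ℝ, sigRev X a [(1 : Fin 2)] t = x t := by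
    intro t
    rw [sigRev_cons]
    simp only [sigRev_nil, hX1, one_mul]
    rw [integral_deriv_eq_sub (fun s _ => (hx.differentiable (by simp)).differentiableAt)
      ((hx.continuous_deriv (by simp)).intervalIntegrable _ _), hxa, sub_zero]
  have coeff : ∀ w : List (Fin 2),
      sigCoeff X a b (w ++ [(0 : Fin 2)]) = ∫ s in a..b, sigRev X a w.reverse s := by
    intro w
    unfold sigCoeff
    rw [List.reverse_append]
    simp only [List.reverse_cons, List.reverse_nil, List.nil_append, List.singleton_append]
    rw [sigRev_cons]
    simp [hX0, deriv_id'']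
  simp only [coeff]
  rw [← integral_list_sum _ _ (fun w _ => sigRev_continuous X a hD w.reverse) a b]
  apply intervalIntegral.integral_congr
  intro s _
  simp only [main_pointwise X a hD (0 : Fin 2) (1 : Fin 2) n m, sig0, sig1]
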